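/- arXiv:2007.13482 — 2 statements merged into one kernel-verified Lean document; each statement's English description precedes it below -/
import Mathlib

section
/- Binary convergence: define the recursion p(k+1) = p(k) − p(k)(1−p(k))(p(k)−ρ)/W(p(k)) with W(p) = 1 − (1−ρ)p² − ρ(1−p)², 0 < ρ < 1. For any initial value 0 < p(0) < 1, the sequence p(k) converges to ρ as k → ∞. -/
/-!
Writing `a = (1 - ρ)(1 - x) + ρx`, one has `W(x) = a + x(1 - x)` and
`f(x) - ρ = a / (a + x(1 - x)) · (x - ρ)`. For `x ∈ (0, 1)` we have `0 ≤ a ≤ 1`, so each step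
moves `x` towards `ρ` without overshooting and shrinks the distance to `ρ` by at least the
factor `1 / (1 + x(1 - x))`. The iterates therefore stay between `p(0)` and `ρ`, where
`x(1 - x)` is bounded below by a positive constant, and converge to `ρ` geometrically.
-/

open Filter Topology Set

lemma tendsto_of_dist_succ_le_mul {X : Type*} [PseudoMetricSpace X] {u : ℕ → X} {a : X}
    {c : ℝ} (hc₀ : 0 ≤ c) (hc₁ : c < 1) (h : ∀ k, dist (u (k + 1)) a ≤ c * dist (u k) a) :
    Tendsto u atTop (𝓝 a) := by
  have hgeom : ∀ k, dist (u k) a ≤ dist (u 0) a * c ^ k := by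
    intro k
    induction k with
    | zero => simp
    | succ k ih =>
      calc dist (u (k + 1)) a ≤ c * dist (u k) a := h k
        _ ≤ c * (dist (u 0) a * c ^ k) := by gcongr
        _ = dist (u 0) a * c ^ (k + 1) := by ring
  rw [tendsto_iff_dist_tendsto_zero]
  refine squeeze_zero (fun _ ↦ dist_nonneg) hgeom ?_
  simpa using (tendsto_pow_atTop_nhds_zero_of_lt_one hc₀ hc₁).const_mul (dist (u 0) a)

namespace BinaryRecursion

noncomputable section

def W (ρ x : ℝ) : ℝ := 1 - (1 - ρ) * x ^ 2 - ρ * (1 - x) ^ 2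

def f (ρ x : ℝ) : ℝ := x - x * (1 - x) * (x - ρ) / W ρ x

def rate (ρ x : ℝ) : ℝ := ((1 - ρ) * (1 - x) + ρ * x) / W ρ x

variable {ρ x : ℝ}

lemma W_eq (ρ x : ℝ) : W ρ x = (1 - ρ) * (1 - x) + ρ * x + x * (1 - x) := by
  unfold W; ring

lemma rate_numerator_nonneg (hρ : ρ ∈ Icc 0 1) (hx : x ∈ Ioo 0 1) :
    0 ≤ (1 - ρ) * (1 - x) + ρ * x := by
  have := mul_nonneg (sub_nonneg.2 hρ.2) (sub_pos.2 hx.2).le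
  have := mul_nonneg hρ.1 hx.1.le
  linarith

lemma W_pos (hρ : ρ ∈ Icc 0 1) (hx : x ∈ Ioo 0 1) : 0 < W ρ x := by
  rw [W_eq]
  have := mul_pos hx.1 (sub_pos.2 hx.2)
  linarith [rate_numerator_nonneg hρ hx]

lemma f_sub_eq (hρ : ρ ∈ Icc 0 1) (hx : x ∈ Ioo 0 1) : f ρ x - ρ = rate ρ x * (x - ρ) := by
  have hW := (W_pos hρ hx).ne'
  unfold f rate
  field_simp
  rw [W_eq]
  ring

lemma rate_nonneg (hρ : ρ ∈ Icc 0 1) (hx : x ∈ Ioo 0 1) : 0 ≤ rate ρ x :=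
  div_nonneg (rate_numerator_nonneg hρ hx) (W_pos hρ hx).le

lemma rate_le (hρ : ρ ∈ Icc 0 1) (hx : x ∈ Ioo 0 1) : rate ρ x ≤ (1 + x * (1 - x))⁻¹ := by
  have hnum_le : (1 - ρ) * (1 - x) + ρ * x ≤ 1 := by nlinarith [hρ.1, hρ.2, hx.1, hx.2]
  have ht := mul_pos hx.1 (sub_pos.2 hx.2)
  rw [rate, div_le_iff₀ (W_pos hρ hx), W_eq, ← div_eq_inv_mul, le_div_iff₀ (by linarith)]
  nlinarith

lemma rate_le_one (hρ : ρ ∈ Icc 0 1) (hx : x ∈ Ioo 0 1) : rate ρ x ≤ 1 :=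
  (rate_le hρ hx).trans (inv_le_one_of_one_le₀ (by nlinarith [hx.1, hx.2]))

lemma f_mem_Icc {lo hi : ℝ} (hρ : ρ ∈ Icc 0 1) (hx : x ∈ Ioo 0 1) (hρI : ρ ∈ Icc lo hi)
    (hxI : x ∈ Icc lo hi) : f ρ x ∈ Icc lo hi := by
  have hf : f ρ x = (1 - rate ρ x) * ρ + rate ρ x * x := by linarith [f_sub_eq hρ hx]
  have h₀ := rate_nonneg hρ hx
  have h₁ := sub_nonneg.2 (rate_le_one hρ hx)
  rw [hf]
  constructor <;> nlinarith [hρI.1, hρI.2, hxI.1, hxI.2]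

lemma abs_f_sub_le (hρ : ρ ∈ Icc 0 1) (hx : x ∈ Ioo 0 1) :
    |f ρ x - ρ| ≤ (1 + x * (1 - x))⁻¹ * |x - ρ| := by
  rw [f_sub_eq hρ hx, abs_mul, abs_of_nonneg (rate_nonneg hρ hx)]
  exact mul_le_mul_of_nonneg_right (rate_le hρ hx) (abs_nonneg _)

end

end BinaryRecursion

open BinaryRecursion in
theorem stmt_14 (ρ : ℝ) (hρ : ρ ∈ Set.Ioo (0:ℝ) 1)
    (p : ℕ → ℝ) (h0 : p 0 ∈ Set.Ioo (0:ℝ) 1)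
    (hrec : ∀ k, p (k + 1) =
      p k - p k * (1 - p k) * (p k - ρ) /
        (1 - (1 - ρ) * (p k) ^ 2 - ρ * (1 - p k) ^ 2)) :
    Tendsto p atTop (nhds ρ) := by
  have hρ' : ρ ∈ Icc 0 1 := Ioo_subset_Icc_self hρ
  set lo := min (p 0) ρ
  set hi := max (p 0) ρ
  have hlo : 0 < lo := lt_min h0.1 hρ.1
  have hhi : hi < 1 := max_lt h0.2 hρ.2
  have hI : Icc lo hi ⊆ Ioo 0 1 := fun x hx ↦ ⟨hlo.trans_le hx.1, hx.2.trans_lt hhi⟩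
  have hρI : ρ ∈ Icc lo hi := ⟨min_le_right _ _, le_max_right _ _⟩
  have hpI : ∀ k, p k ∈ Icc lo hi := by
    intro k
    induction k with
    | zero => exact ⟨min_le_left _ _, le_max_left _ _⟩
    | succ k ih => exact (hrec k).symm ▸ f_mem_Icc hρ' (hI ih) hρI ih
  have hm : 0 < lo * (1 - hi) := mul_pos hlo (sub_pos.2 hhi)
  refine tendsto_of_dist_succ_le_mul (c := (1 + lo * (1 - hi))⁻¹) (by positivity)
    (inv_lt_one_of_one_lt₀ (by linarith)) fun k ↦ ?_
  obtain ⟨hlo_le, hle_hi⟩ := hpI k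
  rw [Real.dist_eq, Real.dist_eq, hrec k]
  calc |f ρ (p k) - ρ| ≤ (1 + p k * (1 - p k))⁻¹ * |p k - ρ| := abs_f_sub_le hρ' (hI (hpI k))
    _ ≤ (1 + lo * (1 - hi))⁻¹ * |p k - ρ| := by
      have hhi' : 0 ≤ 1 - hi := by linarith
      have hpk : 0 ≤ p k := by linarith
      gcongr
end

section
/- The binary map f(p) = p − p(1−p)(p−ρ)/W(p), with W(p) = 1 − (1−ρ)p² − ρ(1−p)² and ρ ∈ (0,1), maps the open interval (0,1) into itself, and satisfies f(p) > p for p < ρ, f(p) < p for p > ρ, and f(ρ) = ρ. -/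
/-! The weight `W` is positive on `(0, 1)`, being `1` minus a convex combination of `p ^ 2 < 1` and
`(1 - p) ^ 2 < 1`. Clearing it gives `f p = p (1 - (1 - ρ) p) / W p`,
`1 - f p = (1 - p) (1 - ρ (1 - p)) / W p` and `f p - p = p (1 - p) (ρ - p) / W p`, whose signs
are read off directly. -/

open Set

noncomputable section

def binaryWeight (ρ p : ℝ) : ℝ := 1 - (1 - ρ) * p ^ 2 - ρ * (1 - p) ^ 2

def binaryMap (ρ p : ℝ) : ℝ := p - p * (1 - p) * (p - ρ) / binaryWeight ρ p

end

section

variable {ρ p : ℝ}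

theorem binaryWeight_pos (hρ : ρ ∈ Icc (0 : ℝ) 1) (hp : p ∈ Ioo (0 : ℝ) 1) :
    0 < binaryWeight ρ p := by
  obtain ⟨hρ0, hρ1⟩ := hρ
  obtain ⟨hp0, hp1⟩ := hp
  have hsq : p ^ 2 < 1 := by nlinarith
  have hsq' : (1 - p) ^ 2 < 1 := by nlinarith
  unfold binaryWeight
  nlinarith [mul_le_mul_of_nonneg_left hsq.le (sub_nonneg.2 hρ1),
    mul_le_mul_of_nonneg_left hsq'.le hρ0]

theorem binaryMap_eq_div (h : binaryWeight ρ p ≠ 0) :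
    binaryMap ρ p = p * (1 - (1 - ρ) * p) / binaryWeight ρ p := by
  rw [binaryMap, eq_div_iff h, sub_mul, div_mul_cancel₀ _ h, binaryWeight]
  ring

theorem one_sub_binaryMap (h : binaryWeight ρ p ≠ 0) :
    1 - binaryMap ρ p = (1 - p) * (1 - ρ * (1 - p)) / binaryWeight ρ p := by
  rw [binaryMap_eq_div h, eq_div_iff h, sub_mul, div_mul_cancel₀ _ h, binaryWeight]
  ring

theorem binaryMap_sub_self (ρ p : ℝ) :
    binaryMap ρ p - p = p * (1 - p) * (ρ - p) / binaryWeight ρ p := by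
  rw [binaryMap, ← neg_sub ρ p, mul_neg, neg_div]
  ring

theorem binaryMap_self (ρ : ℝ) : binaryMap ρ ρ = ρ := by
  simp [binaryMap]

theorem binaryMap_mem_Ioo (hρ : ρ ∈ Icc (0 : ℝ) 1) (hp : p ∈ Ioo (0 : ℝ) 1) :
    binaryMap ρ p ∈ Ioo (0 : ℝ) 1 := by
  have hW := binaryWeight_pos hρ hp
  obtain ⟨hρ0, hρ1⟩ := hρ
  obtain ⟨hp0, hp1⟩ := hp
  constructor
  · rw [binaryMap_eq_div hW.ne']
    exact div_pos (mul_pos hp0 (by nlinarith)) hW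
  · have hgap : 0 < 1 - binaryMap ρ p := by
      rw [one_sub_binaryMap hW.ne']
      exact div_pos (mul_pos (by linarith) (by nlinarith)) hW
    linarith

theorem lt_binaryMap (hρ : ρ ∈ Icc (0 : ℝ) 1) (hp : p ∈ Ioo (0 : ℝ) 1) (hpρ : p < ρ) :
    p < binaryMap ρ p := by
  have hgap : 0 < binaryMap ρ p - p := by
    rw [binaryMap_sub_self]
    exact div_pos (mul_pos (mul_pos hp.1 (sub_pos.2 hp.2)) (sub_pos.2 hpρ))
      (binaryWeight_pos hρ hp)
  linarith

theorem binaryMap_lt (hρ : ρ ∈ Icc (0 : ℝ) 1) (hp : p ∈ Ioo (0 : ℝ) 1) (hρp : ρ < p) :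
    binaryMap ρ p < p := by
  have hgap : binaryMap ρ p - p < 0 := by
    rw [binaryMap_sub_self]
    exact div_neg_of_neg_of_pos (mul_neg_of_pos_of_neg (mul_pos hp.1 (sub_pos.2 hp.2))
      (sub_neg.2 hρp)) (binaryWeight_pos hρ hp)
  linarith

end

theorem stmt_15 (ρ : ℝ) (hρ : ρ ∈ Set.Ioo (0:ℝ) 1)
    (W f : ℝ → ℝ)
    (hW : ∀ p, W p = 1 - (1 - ρ) * p ^ 2 - ρ * (1 - p) ^ 2)
    (hf : ∀ p, f p = p - p * (1 - p) * (p - ρ) / W p) :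
    (∀ p ∈ Set.Ioo (0:ℝ) 1, f p ∈ Set.Ioo (0:ℝ) 1) ∧
    (∀ p ∈ Set.Ioo (0:ℝ) 1, p < ρ → p < f p) ∧
    (∀ p ∈ Set.Ioo (0:ℝ) 1, ρ < p → f p < p) ∧
    f ρ = ρ := by
  have hW' : W = binaryWeight ρ := funext hW
  obtain rfl : f = binaryMap ρ := funext fun p => by rw [hf, hW', binaryMap]
  have hρ' : ρ ∈ Icc (0 : ℝ) 1 := Ioo_subset_Icc_self hρ
  exact ⟨fun p hp => binaryMap_mem_Ioo hρ' hp, fun p hp => lt_binaryMap hρ' hp,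
    fun p hp => binaryMap_lt hρ' hp, binaryMap_self ρ⟩
end
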